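/- Let Ω ⊂ ℝⁿ be a proper convex domain and m ≥ 1. Then the tube T_Ω = {z ∈ ℂⁿ : Re z ∈ Ω} is locally m-convex (as a domain in ℂⁿ = ℝ^{2n} with the complex-line distance function) if and only if Ω is locally m-convex (as a domain in ℝⁿ with the real-line distance function). -/

import Mathlib

open Set Metric

noncomputable section

/-- Distance to the complement, real case. -/
def deltaR {n : ℕ} (Ω : Set (EuclideanSpace ℝ (Fin n)))
    (p : EuclideanSpace ℝ (Fin n)) : ℝ :=
  Metric.infDist p Ωᶜ

/-- Distance to the complement along the real line through `p` in direction `v`. -/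
def deltaRLine {n : ℕ} (Ω : Set (EuclideanSpace ℝ (Fin n)))
    (p v : EuclideanSpace ℝ (Fin n)) : ℝ :=
  sInf {d | ∃ t : ℝ, p + t • v ∉ Ω ∧ d = ‖t • v‖}

/-- `Ω ⊆ ℝⁿ` is locally `m`-convex. -/
def LocallyMConvexR {n : ℕ} (Ω : Set (EuclideanSpace ℝ (Fin n))) (m : ℝ) : Prop :=
  ∀ R > (0:ℝ), ∃ C > (0:ℝ), ∀ p ∈ Ω, ‖p‖ < R →
    ∀ v : EuclideanSpace ℝ (Fin n), v ≠ 0 →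
      deltaRLine Ω p v ≤ C * (deltaR Ω p) ^ (1 / m)

/-- Distance to the complement, complex case. -/
def deltaC {n : ℕ} (D : Set (EuclideanSpace ℂ (Fin n)))
    (p : EuclideanSpace ℂ (Fin n)) : ℝ :=
  Metric.infDist p Dᶜ

/-- Distance to the complement along the complex line through `p` in direction `v`. -/
def deltaCLine {n : ℕ} (D : Set (EuclideanSpace ℂ (Fin n)))
    (p v : EuclideanSpace ℂ (Fin n)) : ℝ :=
  sInf {d | ∃ t : ℂ, p + t • v ∉ D ∧ d = ‖t • v‖}

/-- `D ⊆ ℂⁿ` is locally `m`-convex. -/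
def LocallyMConvexC {n : ℕ} (D : Set (EuclideanSpace ℂ (Fin n))) (m : ℝ) : Prop :=
  ∀ R > (0:ℝ), ∃ C > (0:ℝ), ∀ p ∈ D, ‖p‖ < R →
    ∀ v : EuclideanSpace ℂ (Fin n), v ≠ 0 →
      deltaCLine D p v ≤ C * (deltaC D p) ^ (1 / m)

/-- The tube domain over `Ω ⊆ ℝⁿ`. -/
def Tube {n : ℕ} (Ω : Set (EuclideanSpace ℝ (Fin n))) :
    Set (EuclideanSpace ℂ (Fin n)) :=
  {z | WithLp.toLp 2 (fun i => (z i).re) ∈ Ω}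

/-!
The boundary distance of `T_Ω` at `z` is that of `Ω` at `Re z`, and the complex line through `z`
in direction `v` projects onto the real plane `Re z + span {Re v, Im v}`. Restricting to real
points and real directions gives one implication. For the other, every real direction `u` of that
plane whose line leaves `Ω` bounds the complex-line distance by `(‖t‖ ‖v‖ / ‖u‖) δ_Ω(Re z; u)`,
where `u = Re (t v)`. If the complex line leaves `T_Ω`, such a `u` with ratio at most `2` exists:
either the longer of `Re v`, `Im v` works, or its line lies in the open convex set `Ω`; then all
lines parallel to it do, and the longer diagonal `Re v ± Im v` works.
-/

open Filter Topology

theorem Convex.add_smul_mem_of_forall_add_smul_mem {E : Type*} [AddCommGroup E] [Module ℝ E]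
    [TopologicalSpace E] [ContinuousAdd E] [ContinuousSMul ℝ E] {Ω : Set E}
    (hconv : Convex ℝ Ω) (hΩ : IsOpen Ω) {a w : E} (hline : ∀ s : ℝ, a + s • w ∈ Ω)
    {x : E} (hx : x ∈ Ω) (s : ℝ) : x + s • w ∈ Ω := by
  have hnear : ∀ᶠ ε in 𝓝[>] (0 : ℝ), 0 < ε ∧ x + ε • (x - a) ∈ Ω := by
    refine eventually_mem_nhdsWithin.and (Filter.Eventually.filter_mono nhdsWithin_le_nhds ?_)
    have hcont : Continuous fun ε : ℝ => x + ε • (x - a) := by fun_prop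
    exact hcont.continuousAt.eventually_mem (by simpa using hΩ.mem_nhds hx)
  obtain ⟨ε, hε, hxε⟩ := hnear.exists
  -- `x + s • w` lies on the segment from `x + ε • (x - a)` to a far point of the line `a + ℝ w`.
  have hcomb : x + s • w = (1 / (1 + ε)) • (x + ε • (x - a))
      + (ε / (1 + ε)) • (a + ((1 + ε) / ε * s) • w) := by
    match_scalars <;> field_simp
    ring
  rw [hcomb]
  exact hconv hxε (hline _) (by positivity) (by positivity) (by field_simp)

theorem Convex.exists_add_smul_notMem_of_add_notMem {E : Type*} [NormedAddCommGroup E]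
    [InnerProductSpace ℝ E] {Ω : Set E} (hconv : Convex ℝ Ω) (hΩ : IsOpen Ω) {x a b : E}
    {α β : ℝ} (hexit : x + (α • a + β • b) ∉ Ω) :
    ∃ c d : ℝ, (∃ s : ℝ, x + s • (c • a + d • b) ∉ Ω) ∧
      (c ^ 2 + d ^ 2) * (‖a‖ ^ 2 + ‖b‖ ^ 2) ≤ 4 * ‖c • a + d • b‖ ^ 2 := by
  wlog hab : ‖b‖ ≤ ‖a‖ generalizing a b α β
  · obtain ⟨c, d, hexit', hnorm⟩ := this (a := b) (b := a) (α := β) (β := α)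
      (by rwa [add_comm (β • b)]) (le_of_not_ge hab)
    refine ⟨d, c, by simpa only [add_comm (d • a)] using hexit', ?_⟩
    rwa [add_comm (d • a), add_comm (d ^ 2), add_comm (‖a‖ ^ 2)]
  by_cases ha : ∃ s : ℝ, x + s • a ∉ Ω
  · exact ⟨1, 0, by simpa using ha, by simp; nlinarith [norm_nonneg a, norm_nonneg b]⟩
  push Not at ha
  -- Every line parallel to `a` stays in `Ω`, so the exit point can be slid along `a` onto the
  -- line `x + ℝ (a + σ b)`; the sign `σ` makes `a + σ b` the longer diagonal.
  obtain ⟨σ, hσ, hdiag⟩ : ∃ σ : ℝ, σ ^ 2 = 1 ∧ ‖a‖ ^ 2 + ‖b‖ ^ 2 ≤ ‖a + σ • b‖ ^ 2 := by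
    rcases le_total 0 (inner ℝ a b) with h | h
    · exact ⟨1, by norm_num, by rw [one_smul, norm_add_sq_real]; linarith⟩
    · exact ⟨-1, by norm_num, by rw [neg_one_smul, ← sub_eq_add_neg, norm_sub_sq_real]; linarith⟩
  refine ⟨1, σ, ⟨σ * β, fun hmem => hexit ?_⟩, ?_⟩
  · have hslide := hconv.add_smul_mem_of_forall_add_smul_mem hΩ ha (by simpa using hmem)
      (α - σ * β)
    convert hslide using 1
    linear_combination (norm := module) hσ • (-β • b)
  · rw [one_smul, hσ]
    nlinarith [norm_nonneg a, norm_nonneg b]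

section LineDistance

variable {n : ℕ}

theorem deltaRLine_nonneg (Ω : Set (EuclideanSpace ℝ (Fin n))) (p v : EuclideanSpace ℝ (Fin n)) :
    0 ≤ deltaRLine Ω p v :=
  Real.sInf_nonneg (by rintro _ ⟨t, _, rfl⟩; positivity)

theorem deltaRLine_le {Ω : Set (EuclideanSpace ℝ (Fin n))} {p v : EuclideanSpace ℝ (Fin n)}
    {t : ℝ} (ht : p + t • v ∉ Ω) : deltaRLine Ω p v ≤ ‖t • v‖ :=
  csInf_le ⟨0, by rintro _ ⟨t, _, rfl⟩; positivity⟩ ⟨t, ht, rfl⟩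

theorem deltaRLine_eq_zero_of_forall_mem {Ω : Set (EuclideanSpace ℝ (Fin n))}
    {p v : EuclideanSpace ℝ (Fin n)} (h : ∀ t : ℝ, p + t • v ∈ Ω) : deltaRLine Ω p v = 0 := by
  simp [deltaRLine, h]

theorem deltaCLine_nonneg (D : Set (EuclideanSpace ℂ (Fin n))) (p v : EuclideanSpace ℂ (Fin n)) :
    0 ≤ deltaCLine D p v :=
  Real.sInf_nonneg (by rintro _ ⟨t, _, rfl⟩; positivity)

theorem deltaCLine_le {D : Set (EuclideanSpace ℂ (Fin n))} {p v : EuclideanSpace ℂ (Fin n)}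
    {t : ℂ} (ht : p + t • v ∉ D) : deltaCLine D p v ≤ ‖t • v‖ :=
  csInf_le ⟨0, by rintro _ ⟨t, _, rfl⟩; positivity⟩ ⟨t, ht, rfl⟩

theorem deltaCLine_eq_zero_of_forall_mem {D : Set (EuclideanSpace ℂ (Fin n))}
    {p v : EuclideanSpace ℂ (Fin n)} (h : ∀ t : ℂ, p + t • v ∈ D) : deltaCLine D p v = 0 := by
  simp [deltaCLine, h]

end LineDistance

namespace EuclideanSpace

variable {n : ℕ}

def re (z : EuclideanSpace ℂ (Fin n)) : EuclideanSpace ℝ (Fin n) :=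
  WithLp.toLp 2 fun i => (z i).re

def im (z : EuclideanSpace ℂ (Fin n)) : EuclideanSpace ℝ (Fin n) :=
  WithLp.toLp 2 fun i => (z i).im

def ofReal (x : EuclideanSpace ℝ (Fin n)) : EuclideanSpace ℂ (Fin n) :=
  WithLp.toLp 2 fun i => (x i : ℂ)

@[simp]
theorem re_add (z w : EuclideanSpace ℂ (Fin n)) : re (z + w) = re z + re w := by
  ext i; simp [re]

@[simp]
theorem re_sub (z w : EuclideanSpace ℂ (Fin n)) : re (z - w) = re z - re w := by
  ext i; simp [re]

@[simp]
theorem re_smul_real (s : ℝ) (z : EuclideanSpace ℂ (Fin n)) : re (s • z) = s • re z := by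
  ext i; simp [re]

theorem re_smul (t : ℂ) (z : EuclideanSpace ℂ (Fin n)) :
    re (t • z) = t.re • re z - t.im • im z := by
  ext i; simp [re, im]

@[simp]
theorem re_ofReal (x : EuclideanSpace ℝ (Fin n)) : re (ofReal x) = x := rfl

@[simp]
theorem im_ofReal (x : EuclideanSpace ℝ (Fin n)) : im (ofReal x) = 0 := by
  ext i; simp [im, ofReal]

@[simp]
theorem norm_ofReal (x : EuclideanSpace ℝ (Fin n)) : ‖ofReal x‖ = ‖x‖ := by
  simp [EuclideanSpace.norm_eq, ofReal]

theorem ofReal_ne_zero {x : EuclideanSpace ℝ (Fin n)} (hx : x ≠ 0) : ofReal x ≠ 0 := by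
  simpa [← norm_pos_iff] using hx

theorem norm_sq_eq_norm_re_sq_add_norm_im_sq (z : EuclideanSpace ℂ (Fin n)) :
    ‖z‖ ^ 2 = ‖re z‖ ^ 2 + ‖im z‖ ^ 2 := by
  simp only [EuclideanSpace.norm_sq_eq, ← Finset.sum_add_distrib, Complex.sq_norm,
    Complex.normSq_apply, re, im, Real.norm_eq_abs, sq_abs]
  ring_nf

theorem norm_re_le (z : EuclideanSpace ℂ (Fin n)) : ‖re z‖ ≤ ‖z‖ := by
  have := norm_sq_eq_norm_re_sq_add_norm_im_sq z
  nlinarith [norm_nonneg z, norm_nonneg (re z), sq_nonneg ‖im z‖]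

theorem infEDist_re_preimage (z : EuclideanSpace ℂ (Fin n)) (S : Set (EuclideanSpace ℝ (Fin n))) :
    Metric.infEDist z (re ⁻¹' S) = Metric.infEDist (re z) S := by
  refine le_antisymm (Metric.le_infEDist.2 fun y hy => ?_) (Metric.le_infEDist.2 fun w hw => ?_)
  · calc Metric.infEDist z (re ⁻¹' S) ≤ edist z (z + ofReal (y - re z)) :=
          Metric.infEDist_le_edist_of_mem (by simpa using hy)
      _ = edist (re z) y := by
          rw [edist_dist, edist_dist, dist_eq_norm, dist_eq_norm, sub_add_cancel_left, norm_neg,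
            norm_ofReal, ← norm_neg, neg_sub]
  · calc Metric.infEDist (re z) S ≤ edist (re z) (re w) := Metric.infEDist_le_edist_of_mem hw
      _ ≤ edist z w := by
          rw [edist_dist, edist_dist, dist_eq_norm, dist_eq_norm, ← re_sub]
          exact ENNReal.ofReal_le_ofReal (norm_re_le _)

end EuclideanSpace

open EuclideanSpace

section TubeDomain

variable {n : ℕ}

theorem mem_tube_iff {Ω : Set (EuclideanSpace ℝ (Fin n))} {z : EuclideanSpace ℂ (Fin n)} :
    z ∈ Tube Ω ↔ re z ∈ Ω :=
  Iff.rfl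

theorem deltaC_tube (Ω : Set (EuclideanSpace ℝ (Fin n))) (p : EuclideanSpace ℂ (Fin n)) :
    deltaC (Tube Ω) p = deltaR Ω (re p) := by
  rw [deltaC, deltaR, Metric.infDist, Metric.infDist, ← infEDist_re_preimage]
  rfl

theorem deltaRLine_le_deltaCLine_tube_ofReal (Ω : Set (EuclideanSpace ℝ (Fin n)))
    (x v : EuclideanSpace ℝ (Fin n)) :
    deltaRLine Ω x v ≤ deltaCLine (Tube Ω) (ofReal x) (ofReal v) := by
  have hre : ∀ t : ℂ, re (ofReal x + t • ofReal v) = x + t.re • v := by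
    simp [re_smul]
  by_cases hexit : ∃ s : ℝ, x + s • v ∉ Ω
  · obtain ⟨s, hs⟩ := hexit
    refine le_csInf ⟨_, s, by simpa [mem_tube_iff, hre] using hs, rfl⟩ ?_
    rintro _ ⟨t, ht, rfl⟩
    calc deltaRLine Ω x v ≤ ‖t.re • v‖ := deltaRLine_le (by rwa [mem_tube_iff, hre] at ht)
      _ ≤ ‖t • ofReal v‖ := by
          rw [norm_smul, norm_smul, norm_ofReal, Real.norm_eq_abs]
          gcongr
          exact Complex.abs_re_le_norm t
  · push Not at hexit
    rw [deltaRLine_eq_zero_of_forall_mem hexit]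
    exact deltaCLine_nonneg _ _ _

theorem deltaCLine_tube_le_mul_deltaRLine {Ω : Set (EuclideanSpace ℝ (Fin n))}
    {p v : EuclideanSpace ℂ (Fin n)} {t : ℂ} {c : ℝ} (hc : 0 < c)
    (hnorm : ‖t‖ * ‖v‖ ≤ c * ‖re (t • v)‖) (hexit : ∃ s : ℝ, re p + s • re (t • v) ∉ Ω) :
    deltaCLine (Tube Ω) p v ≤ c * deltaRLine Ω (re p) (re (t • v)) := by
  rw [← div_le_iff₀' hc]
  obtain ⟨s, hs⟩ := hexit
  refine le_csInf ⟨_, s, hs, rfl⟩ ?_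
  rintro _ ⟨s, hs, rfl⟩
  have hre : re (p + ((s : ℂ) * t) • v) = re p + s • re (t • v) := by
    simp [mul_smul, re_smul]
  rw [div_le_iff₀' hc]
  calc deltaCLine (Tube Ω) p v ≤ ‖((s : ℂ) * t) • v‖ :=
        deltaCLine_le (by rwa [mem_tube_iff, hre])
    _ = |s| * (‖t‖ * ‖v‖) := by
        rw [norm_smul, norm_mul, Complex.norm_real, Real.norm_eq_abs, mul_assoc]
    _ ≤ |s| * (c * ‖re (t • v)‖) := by gcongr
    _ = c * ‖s • re (t • v)‖ := by rw [norm_smul, Real.norm_eq_abs]; ring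

theorem deltaCLine_tube_le {Ω : Set (EuclideanSpace ℝ (Fin n))} (hconv : Convex ℝ Ω)
    (hΩ : IsOpen Ω) {p v : EuclideanSpace ℂ (Fin n)} (hp : p ∈ Tube Ω) {K : ℝ} (hK₀ : 0 ≤ K)
    (hK : ∀ u : EuclideanSpace ℝ (Fin n), u ≠ 0 → deltaRLine Ω (re p) u ≤ K) :
    deltaCLine (Tube Ω) p v ≤ 2 * K := by
  by_cases hexit : ∃ t : ℂ, p + t • v ∉ Tube Ω
  swap
  · push Not at hexit
    rw [deltaCLine_eq_zero_of_forall_mem hexit]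
    positivity
  obtain ⟨t₀, ht₀⟩ := hexit
  obtain ⟨c, d, ⟨s, hs⟩, hcd⟩ := hconv.exists_add_smul_notMem_of_add_notMem hΩ
    (x := re p) (a := re v) (b := -im v) (α := t₀.re) (β := t₀.im)
    (by simpa [mem_tube_iff, re_smul, sub_eq_add_neg] using ht₀)
  set t : ℂ := ⟨c, d⟩
  have hu : re (t • v) = c • re v + d • -im v := by simp [t, re_smul, sub_eq_add_neg]
  have hu₀ : re (t • v) ≠ 0 := fun h => hs (by rwa [← hu, h, smul_zero, add_zero])
  have hnorm : ‖t‖ * ‖v‖ ≤ 2 * ‖re (t • v)‖ := by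
    rw [← pow_le_pow_iff_left₀ (by positivity) (by positivity) two_ne_zero, mul_pow, mul_pow,
      Complex.sq_norm, Complex.normSq_mk, norm_sq_eq_norm_re_sq_add_norm_im_sq, hu]
    rw [norm_neg] at hcd
    linarith
  calc deltaCLine (Tube Ω) p v ≤ 2 * deltaRLine Ω (re p) (re (t • v)) :=
        deltaCLine_tube_le_mul_deltaRLine two_pos hnorm ⟨s, by rwa [hu]⟩
    _ ≤ 2 * K := by gcongr; exact hK _ hu₀

end TubeDomain

theorem stmt_18_general {n : ℕ} (Ω : Set (EuclideanSpace ℝ (Fin n)))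
    (hΩopen : IsOpen Ω) (hΩconv : Convex ℝ Ω) (m : ℝ) :
    LocallyMConvexC (Tube Ω) m ↔ LocallyMConvexR Ω m := by
  constructor
  · intro h R hR
    obtain ⟨C, hC, hbound⟩ := h R hR
    refine ⟨C, hC, fun x hx hxR v hv => ?_⟩
    calc deltaRLine Ω x v ≤ deltaCLine (Tube Ω) (ofReal x) (ofReal v) :=
          deltaRLine_le_deltaCLine_tube_ofReal Ω x v
      _ ≤ C * deltaC (Tube Ω) (ofReal x) ^ (1 / m) :=
          hbound _ (by rwa [mem_tube_iff, re_ofReal]) (by rwa [norm_ofReal]) _ (ofReal_ne_zero hv)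
      _ = C * deltaR Ω x ^ (1 / m) := by rw [deltaC_tube, re_ofReal]
  · intro h R hR
    obtain ⟨C, hC, hbound⟩ := h R hR
    refine ⟨2 * C, by positivity, fun p hp hpR v _ => ?_⟩
    calc deltaCLine (Tube Ω) p v ≤ 2 * (C * deltaR Ω (re p) ^ (1 / m)) :=
          deltaCLine_tube_le hΩconv hΩopen hp
            (mul_nonneg hC.le (Real.rpow_nonneg Metric.infDist_nonneg _))
            (hbound _ hp ((norm_re_le p).trans_lt hpR))
      _ = 2 * C * deltaC (Tube Ω) p ^ (1 / m) := by rw [deltaC_tube, mul_assoc]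

theorem stmt_18 {n : ℕ} (Ω : Set (EuclideanSpace ℝ (Fin n)))
    (hΩopen : IsOpen Ω) (hΩconv : Convex ℝ Ω) (hΩne : Ω.Nonempty)
    (hΩproper : Ω ≠ Set.univ) (m : ℝ) (hm : 1 ≤ m) :
    LocallyMConvexC (Tube Ω) m ↔ LocallyMConvexR Ω m :=
  stmt_18_general Ω hΩopen hΩconv m

end
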